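/- arXiv:2305.09427 — 4 statements merged into one kernel-verified Lean document; each statement's English description precedes it below -/
import Mathlib

section
/- For every positive real u within the radius of convergence of Φ, one has u ≤ ρ·Φ(u), with equality if and only if u = τ. (The line u ↦ u/ρ is tangent to the convex function Φ at τ.) -/
/-!
A power series with nonnegative coefficients and a nonzero coefficient of degree `≥ 2` is
strictly convex on every interval `[0, M]` on which it converges. The hypothesis
`Φ(τ) = τ Φ'(τ)` says that the tangent to `Φ` at `τ` is the line `u ↦ u Φ'(τ)` through the
origin, and `ρ = τ / Φ(τ) = 1 / Φ'(τ)`; strict convexity puts the graph of `Φ` strictly above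
this tangent away from `τ`.
-/

open Set

lemma summable_mul_pow_of_le {w : ℕ → ℝ} (hw : ∀ j, 0 ≤ w j) {t M : ℝ}
    (hM : Summable fun j => w j * M ^ j) (ht : 0 ≤ t) (htM : t ≤ M) :
    Summable fun j => w j * t ^ j :=
  hM.of_nonneg_of_le (fun j => mul_nonneg (hw j) (pow_nonneg ht j))
    (fun j => mul_le_mul_of_nonneg_left (pow_le_pow_left₀ ht htM j) (hw j))

lemma strictConvexOn_tsum_mul_pow {w : ℕ → ℝ} (hw : ∀ j, 0 ≤ w j) {j₀ : ℕ} (hj₀ : 2 ≤ j₀)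
    (hwj₀ : 0 < w j₀) {M : ℝ} (hM : Summable fun j => w j * M ^ j) :
    StrictConvexOn ℝ (Icc 0 M) fun t => ∑' j, w j * t ^ j := by
  refine ⟨convex_Icc 0 M, fun x hx y hy hxy a b ha hb hab => ?_⟩
  have hsum : ∀ t ∈ Icc 0 M, Summable fun j => w j * t ^ j :=
    fun t ht => summable_mul_pow_of_le hw hM ht.1 ht.2
  have hterm : ∀ j, w j * (a * x + b * y) ^ j ≤ a * (w j * x ^ j) + b * (w j * y ^ j) := by
    intro j
    have := (convexOn_pow j).2 hx.1 hy.1 ha.le hb.le hab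
    simp only [smul_eq_mul] at this
    nlinarith [hw j]
  have hterm₀ : w j₀ * (a * x + b * y) ^ j₀ < a * (w j₀ * x ^ j₀) + b * (w j₀ * y ^ j₀) := by
    have := (strictConvexOn_pow hj₀).2 hx.1 hy.1 hxy ha hb hab
    simp only [smul_eq_mul] at this
    nlinarith
  have hmid : a * x + b * y ∈ Icc 0 M := convex_Icc 0 M hx hy ha.le hb.le hab
  calc ∑' j, w j * (a • x + b • y) ^ j
      < ∑' j, (a * (w j * x ^ j) + b * (w j * y ^ j)) :=
        Summable.tsum_lt_tsum hterm hterm₀ (hsum _ hmid)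
          (((hsum x hx).mul_left a).add ((hsum y hy).mul_left b))
    _ = a • ∑' j, w j * x ^ j + b • ∑' j, w j * y ^ j := by
        rw [((hsum x hx).mul_left a).tsum_add ((hsum y hy).mul_left b), tsum_mul_left,
          tsum_mul_left, smul_eq_mul, smul_eq_mul]

lemma StrictConvexOn.add_mul_sub_lt_of_hasDerivAt {S : Set ℝ} {f : ℝ → ℝ} {x y f' : ℝ}
    (hf : StrictConvexOn ℝ S f) (hx : x ∈ S) (hy : y ∈ S) (hyx : y ≠ x)
    (hf' : HasDerivAt f f' x) : f x + f' * (y - x) < f y := by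
  rcases hyx.lt_or_gt with hlt | hgt
  · have := hf.slope_lt_of_hasDerivAt hy hx hlt hf'
    rw [slope_def_field, div_lt_iff₀ (sub_pos.2 hlt)] at this
    linarith
  · have := hf.lt_slope_of_hasDerivAt hx hy hgt hf'
    rw [slope_def_field, lt_div_iff₀ (sub_pos.2 hgt)] at this
    linarith

theorem stmt_2_general (w : ℕ → ℝ) (hw : ∀ j, 0 ≤ w j)
    (hj : ∃ j, 2 ≤ j ∧ 0 < w j)
    (τ : ℝ) (hτ : 0 < τ)
    (Φ : ℝ → ℝ) (hΦ : ∀ t, 0 ≤ t → Summable (fun j => w j * t ^ j) → Φ t = ∑' j, w j * t ^ j)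
    (hτsum : Summable fun j => w j * τ ^ j)
    (D : ℝ) (hD : HasDerivAt Φ D τ)
    (hfix : Φ τ = τ * D) :
    ∀ u : ℝ, 0 < u → Summable (fun j => w j * u ^ j) →
      u ≤ (τ / Φ τ) * Φ u ∧ (u = (τ / Φ τ) * Φ u ↔ u = τ) := by
  intro u hu husum
  obtain ⟨j₀, hj₀, hwj₀⟩ := hj
  have hMsum : Summable fun j => w j * max u τ ^ j := by
    rcases max_choice u τ with h | h <;> rw [h] <;> assumption
  have hconv : StrictConvexOn ℝ (Icc 0 (max u τ)) Φ :=
    (strictConvexOn_tsum_mul_pow hw hj₀ hwj₀ hMsum).congr fun t ht =>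
      (hΦ t ht.1 (summable_mul_pow_of_le hw hMsum ht.1 ht.2)).symm
  have hΦτ : 0 < Φ τ := by
    rw [hΦ τ hτ.le hτsum]
    exact hτsum.tsum_pos (fun j => mul_nonneg (hw j) (pow_nonneg hτ.le j)) j₀
      (mul_pos hwj₀ (pow_pos hτ j₀))
  have hDpos : 0 < D := pos_of_mul_pos_right (hfix ▸ hΦτ) hτ.le
  have htangent : u ≠ τ → u * D < Φ u := fun hne => by
    have := hconv.add_mul_sub_lt_of_hasDerivAt ⟨hτ.le, le_max_right u τ⟩
      ⟨hu.le, le_max_left u τ⟩ hne hD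
    linear_combination this - hfix
  have hρ : τ / Φ τ * Φ u = Φ u / D := by
    rw [hfix]
    field_simp
  rw [hρ, le_div_iff₀ hDpos, eq_div_iff hDpos.ne']
  obtain rfl | hne := eq_or_ne u τ
  · exact ⟨hfix.ge, iff_of_true hfix.symm rfl⟩
  · exact ⟨(htangent hne).le, iff_of_false (htangent hne).ne hne⟩

/-- For every positive u within the radius of convergence, u ≤ ρ·Φ(u),
with equality iff u = τ, where ρ = τ/Φ(τ). -/
theorem stmt_2 (w : ℕ → ℝ) (hw : ∀ j, 0 ≤ w j) (hw0 : w 0 = 1)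
    (hj : ∃ j, 2 ≤ j ∧ 0 < w j)
    (τ : ℝ) (hτ : 0 < τ)
    (Φ : ℝ → ℝ) (hΦ : ∀ t, 0 ≤ t → Summable (fun j => w j * t ^ j) → Φ t = ∑' j, w j * t ^ j)
    (hτsum : Summable fun j => w j * τ ^ j)
    (D : ℝ) (hD : HasDerivAt Φ D τ)
    (hfix : Φ τ = τ * D) :
    ∀ u : ℝ, 0 < u → Summable (fun j => w j * u ^ j) →
      u ≤ (τ / Φ τ) * Φ u ∧ (u = (τ / Φ τ) * Φ u ↔ u = τ) :=
  stmt_2_general w hw hj τ hτ Φ hΦ hτsum D hD hfix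
end

section
/- Let (η_k)_{k≥0} be positive reals satisfying η_k = (η_{k−1}/λ)^r · λ · e^{θ_{k−1}} for k ≥ 1, with integer r ≥ 2, λ > 0, and |θ_j| ≤ C·B^{r^j} for constants C > 0 and B ∈ (0,1). Then there is a positive real μ such that log(η_k/λ) = r^k·log μ − ∑_{j≥k} r^{k−1−j} θ_j; consequently η_k = λ·μ^{r^k}·(1 + O(B^{r^k})). -/
/-!
Taking logarithms, `L k = log (η k / λ)` satisfies the affine recursion `L (k + 1) = r L k + θ k`,
whose solution is `L k = r ^ k log μ - S k` with `S k = ∑_{j ≥ 0} r^{-1-j} θ (j + k)` and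
`log μ = L 0 + S 0`. Because `B ^ (r ^ j)` decreases in `j` and `r ≥ 2`, the tail satisfies
`|S k| ≤ C B ^ (r ^ k)`; finally `η k / (λ μ ^ (r ^ k)) = exp (-S k)` and
`|exp x - 1| ≤ |x| exp |x|`.
-/

open Real

lemma Real.abs_exp_sub_one_le_mul_exp (x : ℝ) : |exp x - 1| ≤ |x| * exp |x| := by
  have h := Complex.norm_exp_sub_sum_le_norm_mul_exp x 1
  simp only [Finset.range_one, Finset.sum_singleton, pow_zero, Nat.factorial_zero, Nat.cast_one,
    div_one, pow_one, Complex.norm_real, Real.norm_eq_abs] at h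
  exact_mod_cast h

/-- `tailSum r θ k` is the paper's `∑_{j ≥ k} r^{k-1-j} θ_j`, reindexed by `j ↦ j + k`. -/
noncomputable def tailSum (r : ℝ) (θ : ℕ → ℝ) (k : ℕ) : ℝ := ∑' j : ℕ, (r ^ (j + 1))⁻¹ * θ (j + k)

section
variable {r : ℝ}

lemma hasSum_inv_pow_succ_mul (hr : 1 < r) (ε : ℝ) :
    HasSum (fun j : ℕ => (r ^ (j + 1))⁻¹ * ε) (ε / (r - 1)) := by
  have hr0 : 0 < r := by linarith
  have h := (hasSum_geometric_of_lt_one (inv_nonneg.2 hr0.le) (inv_lt_one_of_one_lt₀ hr)).mul_left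
    (r⁻¹ * ε)
  have hsum : r⁻¹ * ε * (1 - r⁻¹)⁻¹ = ε / (r - 1) := by
    field_simp [(sub_pos.2 hr).ne']
  have hterm : (fun j : ℕ => (r ^ (j + 1))⁻¹ * ε) = fun j => r⁻¹ * ε * r⁻¹ ^ j := by
    ext j; rw [pow_succ, mul_inv, inv_pow]; ring
  rwa [hterm, ← hsum]

lemma norm_inv_pow_succ_mul_le (hr : 1 < r) {a ε : ℝ} (ha : |a| ≤ ε) (j : ℕ) :
    ‖(r ^ (j + 1))⁻¹ * a‖ ≤ (r ^ (j + 1))⁻¹ * ε := by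
  rw [norm_mul, norm_inv, norm_pow, Real.norm_eq_abs, Real.norm_eq_abs, abs_of_pos (by linarith)]
  exact mul_le_mul_of_nonneg_left ha (by positivity)

lemma summable_inv_pow_succ_mul (hr : 1 < r) {a : ℕ → ℝ} {ε : ℝ} (ha : ∀ j, |a j| ≤ ε) :
    Summable (fun j : ℕ => (r ^ (j + 1))⁻¹ * a j) :=
  (hasSum_inv_pow_succ_mul hr ε).summable.of_norm_bounded
    fun j => norm_inv_pow_succ_mul_le hr (ha j) j

lemma abs_tsum_inv_pow_succ_mul_le (hr : 1 < r) {a : ℕ → ℝ} {ε : ℝ} (ha : ∀ j, |a j| ≤ ε) :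
    |∑' j : ℕ, (r ^ (j + 1))⁻¹ * a j| ≤ ε / (r - 1) := by
  rw [← Real.norm_eq_abs]
  exact tsum_of_norm_bounded (hasSum_inv_pow_succ_mul hr ε)
    fun j => norm_inv_pow_succ_mul_le hr (ha j) j

variable {θ : ℕ → ℝ}

lemma tailSum_eq {k : ℕ} (hθ : Summable fun j : ℕ => (r ^ (j + 1))⁻¹ * θ (j + k)) :
    tailSum r θ k = r⁻¹ * (θ k + tailSum r θ (k + 1)) := by
  rw [tailSum, hθ.tsum_eq_zero_add, tailSum, mul_add, ← tsum_mul_left]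
  congr 1
  · simp
  · refine tsum_congr fun j => ?_
    rw [pow_succ, mul_inv, add_right_comm, add_assoc]
    ring

lemma eq_pow_mul_sub_tailSum (hr : r ≠ 0) {L : ℕ → ℝ} (hL : ∀ k, L (k + 1) = r * L k + θ k)
    (hθ : ∀ k, Summable fun j : ℕ => (r ^ (j + 1))⁻¹ * θ (j + k)) (k : ℕ) :
    L k = r ^ k * (L 0 + tailSum r θ 0) - tailSum r θ k := by
  induction k with
  | zero => ring
  | succ k ih =>
    rw [hL, ih, tailSum_eq (hθ k), pow_succ]
    field_simp
    ring

end

/-- If η_k/λ = (η_{k−1}/λ)^r · e^{θ_{k−1}} with |θ_j| ≤ C·B^{r^j}, then there is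
μ > 0 with log(η_k/λ) = r^k·log μ − ∑_{j≥k} r^{k−1−j} θ_j, and consequently
η_k = λ·μ^{r^k}·(1 + O(B^{r^k})). -/
theorem stmt_8 (r : ℕ) (hr : 2 ≤ r) (l B C : ℝ) (hl : 0 < l)
    (hB0 : 0 < B) (hB1 : B < 1) (hC : 0 < C)
    (η : ℕ → ℝ) (hpos : ∀ k, 0 < η k)
    (θ : ℕ → ℝ) (hθ : ∀ j, |θ j| ≤ C * B ^ (r ^ j))
    (hrec : ∀ k, η (k + 1) / l = (η k / l) ^ r * Real.exp (θ k)) :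
    ∃ μ : ℝ, 0 < μ ∧
      (∀ k, Real.log (η k / l)
          = (r : ℝ) ^ k * Real.log μ - ∑' j : ℕ, ((r : ℝ) ^ (j + 1))⁻¹ * θ (j + k)) ∧
      ∃ C' : ℝ, ∀ k, |η k / (l * μ ^ (r ^ k)) - 1| ≤ C' * B ^ (r ^ k) := by
  have hr1 : (1 : ℝ) < r := by exact_mod_cast hr
  have hθ_tail (k j : ℕ) : |θ (j + k)| ≤ C * B ^ (r ^ k) :=
    (hθ _).trans <| mul_le_mul_of_nonneg_left
      (pow_le_pow_of_le_one hB0.le hB1.le (Nat.pow_le_pow_right (by omega) (by omega))) hC.le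
  have hS (k : ℕ) : |tailSum r θ k| ≤ C * B ^ (r ^ k) :=
    (abs_tsum_inv_pow_succ_mul_le hr1 (hθ_tail k)).trans
      (div_le_self (by positivity) (by linarith [show (2 : ℝ) ≤ r by exact_mod_cast hr]))
  have hlog (k : ℕ) : log (η (k + 1) / l) = r * log (η k / l) + θ k := by
    rw [hrec, log_mul (pow_ne_zero _ (div_pos (hpos k) hl).ne') (exp_ne_zero _), log_pow, log_exp]
  have hsol := eq_pow_mul_sub_tailSum (L := fun k => log (η k / l)) (by positivity) hlog
    fun k => summable_inv_pow_succ_mul hr1 (hθ_tail k)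
  set m := log (η 0 / l) + tailSum r θ 0
  refine ⟨exp m, exp_pos m, fun k => by rw [log_exp]; exact hsol k, C * exp C, fun k => ?_⟩
  have hratio : η k / (l * exp m ^ r ^ k) = exp (-tailSum r θ k) := by
    rw [← exp_nat_mul, div_mul_eq_div_div, ← exp_log (div_pos (hpos k) hl), hsol k, ← exp_sub]
    congr 1
    push_cast
    ring
  have hSC : |tailSum r θ k| ≤ C :=
    (hS k).trans (mul_le_of_le_one_right hC.le (pow_le_one₀ hB0.le hB1.le))
  calc |η k / (l * exp m ^ r ^ k) - 1|
      ≤ |tailSum r θ k| * exp |tailSum r θ k| := by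
        rw [hratio, ← abs_neg (tailSum r θ k)]; exact abs_exp_sub_one_le_mul_exp _
    _ ≤ C * B ^ (r ^ k) * exp C := by gcongr; exact hS k
    _ = C * exp C * B ^ (r ^ k) := by ring
end

section
/- Let (ρ_h) be a sequence of positive reals and (y_{h,n}), (y_n) positive reals satisfying y_{h,n}/y_n = (ρ_h/ρ)^{−n}·(1+o(1)) uniformly, with ρ_h = ρ·(1 + κ·ζ^{r^h} + o(ζ^{r^h})) as h → ∞ for constants ρ, κ > 0, ζ ∈ (0,1), r > 1. Then for h = log_r(log_d n) + O(1) with d = ζ^{−1}, y_{h,n}/y_n = exp(−κ·n·ζ^{r^h}·(1+o(1)) + o(1)) as n → ∞. In particular, if n·ζ^{r^h} is bounded then y_{h,n}/y_n = exp(−κ n ζ^{r^h})·(1+o(1)). -/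
/-!
Write `ρ_h / ρ = 1 + x_h` with `x_h = κ ζ^{r^h} (1 + e_h)`. Since `h_n = log_r (log_d n) + O(1)`
tends to infinity, `x_{h_n} → 0`, so `log (1 + x_{h_n}) = κ ζ^{r^{h_n}} (1 + o(1))` and
`(ρ_{h_n}/ρ)^{-n} = exp (-κ n ζ^{r^{h_n}} (1 + o(1)))`; the uniform `1 + o(1)` factor becomes the
additive `o(1)` in the exponent. When `n ζ^{r^{h_n}}` is bounded, the relative error
`κ n ζ^{r^{h_n}} · o(1)` in the exponent is itself `o(1)`.
-/

open Filter Topology Real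

lemma tendsto_log_one_add_div_self :
    Tendsto (fun x : ℝ => log (1 + x) / x) (𝓝[≠] 0) (𝓝 1) := by
  simpa [div_eq_inv_mul] using (hasDerivAt_log one_ne_zero).tendsto_slope_zero

lemma tendsto_atTop_of_eventually_abs_sub_le {α : Type*} {l : Filter α} {f g : α → ℝ} {C : ℝ}
    (hg : Tendsto g l atTop) (hfg : ∀ᶠ a in l, |f a - g a| ≤ C) : Tendsto f l atTop := by
  refine tendsto_atTop_mono' l ?_ (tendsto_atTop_add_const_right l (-C) hg)
  filter_upwards [hfg] with a ha
  linarith [(abs_le.mp ha).1]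

lemma tendsto_rpow_rpow_atTop_of_base_lt_one {ζ r : ℝ} (hζ0 : -1 < ζ) (hζ1 : ζ < 1) (hr : 1 < r) :
    Tendsto (fun h : ℝ => ζ ^ r ^ h) atTop (𝓝 0) :=
  (tendsto_rpow_atTop_of_base_lt_one ζ hζ0 hζ1).comp
    (tendsto_rpow_atTop_of_base_gt_one r hr)

theorem exists_exp_of_tendsto_mul_one_add_pow {y c e : ℕ → ℝ}
    (hy : Tendsto (fun n => y n * (1 + c n * (1 + e n)) ^ n) atTop (𝓝 1))
    (hc : ∀ n, c n ≠ 0) (hc0 : Tendsto c atTop (𝓝 0)) (he : Tendsto e atTop (𝓝 0)) :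
    ∃ u v : ℕ → ℝ, Tendsto u atTop (𝓝 0) ∧ Tendsto v atTop (𝓝 0) ∧
      ∀ᶠ n in atTop, y n = exp (-(n * c n * (1 + u n)) + v n) := by
  obtain ⟨x, hx_def⟩ : ∃ x : ℕ → ℝ, ∀ n, x n = c n * (1 + e n) := ⟨_, fun _ => rfl⟩
  simp only [← hx_def] at hy
  have he1 : ∀ᶠ n in atTop, 1 + e n ≠ 0 :=
    (he.const_add 1).eventually_ne (by simp)
  have hx0 : Tendsto x atTop (𝓝 0) := by
    simpa [← funext hx_def] using hc0.mul (he.const_add 1)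
  have hx : Tendsto x atTop (𝓝[≠] 0) := by
    refine tendsto_nhdsWithin_iff.mpr ⟨hx0, ?_⟩
    filter_upwards [he1] with n hn
    exact hx_def n ▸ mul_ne_zero (hc n) hn
  refine ⟨fun n => log (1 + x n) / c n - 1, fun n => log (y n * (1 + x n) ^ n), ?_, ?_, ?_⟩
  · have hlim := ((tendsto_log_one_add_div_self.comp hx).mul (he.const_add 1)).sub_const 1
    simp only [add_zero, mul_one, sub_self] at hlim
    refine hlim.congr' ?_
    filter_upwards [he1] with n hn
    simp only [Function.comp_apply, hx_def]
    field_simp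
  · exact log_one ▸ (continuousAt_log one_ne_zero).tendsto.comp hy
  · filter_upwards [hy.eventually (eventually_gt_nhds one_pos),
      hx0.eventually (eventually_gt_nhds (neg_lt_zero.mpr one_pos))] with n hyx hx1
    have hexp : exp (-(n * c n * (1 + (log (1 + x n) / c n - 1)))) = ((1 + x n) ^ n)⁻¹ := by
      rw [add_sub_cancel, mul_assoc, mul_div_cancel₀ _ (hc n), exp_neg, exp_nat_mul,
        exp_log (by linarith)]
    rw [exp_add, hexp, exp_log hyx]
    field_simp [(pow_pos (by linarith : 0 < 1 + x n) n).ne']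

theorem exists_exp_mul_one_add_of_isBounded {y s u v : ℕ → ℝ} {C : ℝ}
    (hs : ∀ᶠ n in atTop, |s n| ≤ C) (hu : Tendsto u atTop (𝓝 0)) (hv : Tendsto v atTop (𝓝 0))
    (hy : ∀ᶠ n in atTop, y n = exp (-(s n * (1 + u n)) + v n)) :
    ∃ w : ℕ → ℝ, Tendsto w atTop (𝓝 0) ∧ ∀ᶠ n in atTop, y n = exp (-s n) * (1 + w n) := by
  have hsu : Tendsto (fun n => -(s n * u n) + v n) atTop (𝓝 0) := by
    simpa using (bdd_le_mul_tendsto_zero' C hs hu).neg.add hv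
  refine ⟨fun n => exp (-(s n * u n) + v n) - 1, ?_, ?_⟩
  · simpa using ((continuous_exp.tendsto 0).comp hsu).sub_const 1
  · filter_upwards [hy] with n hn
    rw [hn, add_sub_cancel, ← exp_add]
    ring_nf

theorem stmt_18_general (ρ κ ζ r d : ℝ) (hρ : 0 < ρ) (hκ : 0 < κ)
    (hζ0 : 0 < ζ) (hζ1 : ζ < 1) (hr : 1 < r) (hd : d = ζ⁻¹)
    (ρh : ℕ → ℝ)
    (Y : ℕ → ℕ → ℝ) (yn : ℕ → ℝ)
    (hunif : ∀ δ : ℝ, 0 < δ → ∃ N : ℕ, ∀ n ≥ N, ∀ h : ℕ,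
      |Y h n / yn n * (ρh h / ρ) ^ n - 1| ≤ δ)
    (hsing : ∃ e : ℕ → ℝ, Tendsto e atTop (nhds 0) ∧
      ∀ h : ℕ, ρh h = ρ * (1 + κ * ζ ^ (r ^ (h : ℝ)) * (1 + e h)))
    (hs : ℕ → ℕ) (Cb : ℝ)
    (hhs : ∀ᶠ n : ℕ in atTop, |((hs n : ℝ)) - Real.logb r (Real.logb d n)| ≤ Cb) :
    (∃ u v : ℕ → ℝ, Tendsto u atTop (nhds 0) ∧ Tendsto v atTop (nhds 0) ∧
        ∀ᶠ n : ℕ in atTop,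
          Y (hs n) n / yn n
            = Real.exp (-(κ * n * ζ ^ (r ^ (hs n : ℝ)) * (1 + u n)) + v n)) ∧
    ((∃ Cb2 : ℝ, ∀ n : ℕ, (n : ℝ) * ζ ^ (r ^ (hs n : ℝ)) ≤ Cb2) →
      ∃ u : ℕ → ℝ, Tendsto u atTop (nhds 0) ∧
        ∀ᶠ n : ℕ in atTop,
          Y (hs n) n / yn n
            = Real.exp (-(κ * n * ζ ^ (r ^ (hs n : ℝ)))) * (1 + u n)) := by
  obtain ⟨e, he, hρh⟩ := hsing
  have hd1 : 1 < d := hd ▸ (one_lt_inv₀ hζ0).mpr hζ1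
  have hs_top : Tendsto (fun n => (hs n : ℝ)) atTop atTop :=
    tendsto_atTop_of_eventually_abs_sub_le ((tendsto_logb_atTop hr).comp
      ((tendsto_logb_atTop hd1).comp tendsto_natCast_atTop_atTop)) hhs
  have hc : Tendsto (fun n => κ * ζ ^ r ^ (hs n : ℝ)) atTop (𝓝 0) := by
    simpa using
      ((tendsto_rpow_rpow_atTop_of_base_lt_one (by linarith) hζ1 hr).comp hs_top).const_mul κ
  have he_hs : Tendsto (fun n => e (hs n)) atTop (𝓝 0) :=
    he.comp (tendsto_natCast_atTop_iff.mp hs_top)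
  have hratio : Tendsto (fun n => Y (hs n) n / yn n * (ρh (hs n) / ρ) ^ n) atTop (𝓝 1) := by
    refine Metric.tendsto_atTop.mpr fun ε hε => ?_
    obtain ⟨N, hN⟩ := hunif (ε / 2) (half_pos hε)
    exact ⟨N, fun n hn => (hN n hn (hs n)).trans_lt (half_lt_self hε)⟩
  simp only [hρh, mul_div_cancel_left₀ _ hρ.ne'] at hratio
  obtain ⟨u, v, hu, hv, hY⟩ :=
    exists_exp_of_tendsto_mul_one_add_pow hratio (fun n => by positivity) hc he_hs
  have hY' : ∀ᶠ n in atTop, Y (hs n) n / yn n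
      = exp (-(κ * n * ζ ^ r ^ (hs n : ℝ) * (1 + u n)) + v n) :=
    hY.mono fun n hn => by rw [hn]; ring_nf
  refine ⟨⟨u, v, hu, hv, hY'⟩, fun ⟨C, hC⟩ => ?_⟩
  refine exists_exp_mul_one_add_of_isBounded (C := κ * C) (.of_forall fun n => ?_) hu hv hY'
  rw [abs_of_nonneg (by positivity), mul_assoc]
  exact mul_le_mul_of_nonneg_left (hC n) hκ.le

/-- The asymptotic computation at the heart of Theorem C: if
y_{h,n}/y_n = (ρ_h/ρ)^{−n}(1+o(1)) uniformly in h, and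
ρ_h = ρ(1 + κζ^{r^h} + o(ζ^{r^h})), then for h_n = log_r(log_d n) + O(1)
(with d = ζ⁻¹) we get y_{h_n,n}/y_n = exp(−κ n ζ^{r^{h_n}}(1+o(1)) + o(1));
if moreover n·ζ^{r^{h_n}} is bounded, then
y_{h_n,n}/y_n = exp(−κ n ζ^{r^{h_n}})·(1+o(1)). -/
theorem stmt_18 (ρ κ ζ r d : ℝ) (hρ : 0 < ρ) (hκ : 0 < κ)
    (hζ0 : 0 < ζ) (hζ1 : ζ < 1) (hr : 1 < r) (hd : d = ζ⁻¹)
    (ρh : ℕ → ℝ) (hρhpos : ∀ h, 0 < ρh h)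
    (Y : ℕ → ℕ → ℝ) (yn : ℕ → ℝ)
    (hYpos : ∀ h n, 0 < Y h n) (hynpos : ∀ n, 0 < yn n)
    (hunif : ∀ δ : ℝ, 0 < δ → ∃ N : ℕ, ∀ n ≥ N, ∀ h : ℕ,
      |Y h n / yn n * (ρh h / ρ) ^ n - 1| ≤ δ)
    (hsing : ∃ e : ℕ → ℝ, Tendsto e atTop (nhds 0) ∧
      ∀ h : ℕ, ρh h = ρ * (1 + κ * ζ ^ (r ^ (h : ℝ)) * (1 + e h)))
    (hs : ℕ → ℕ) (Cb : ℝ)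
    (hhs : ∀ᶠ n : ℕ in atTop, |((hs n : ℝ)) - Real.logb r (Real.logb d n)| ≤ Cb) :
    (∃ u v : ℕ → ℝ, Tendsto u atTop (nhds 0) ∧ Tendsto v atTop (nhds 0) ∧
        ∀ᶠ n : ℕ in atTop,
          Y (hs n) n / yn n
            = Real.exp (-(κ * n * ζ ^ (r ^ (hs n : ℝ)) * (1 + u n)) + v n)) ∧
    ((∃ Cb2 : ℝ, ∀ n : ℕ, (n : ℝ) * ζ ^ (r ^ (hs n : ℝ)) ≤ Cb2) →
      ∃ u : ℕ → ℝ, Tendsto u atTop (nhds 0) ∧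
        ∀ᶠ n : ℕ in atTop,
          Y (hs n) n / yn n
            = Real.exp (-(κ * n * ζ ^ (r ^ (hs n : ℝ)))) * (1 + u n)) :=
  stmt_18_general ρ κ ζ r d hρ hκ hζ0 hζ1 hr hd ρh Y yn hunif hsing hs Cb hhs
end

section
/- Let X_n be random variables with values in ℕ such that for every fixed ε ∈ (0,1): P(X_n ≤ h) → 1 whenever h ≥ m_n + ε eventually, and P(X_n ≤ h) → 0 whenever h ≤ m_n − ε eventually, where m_n = log_r(log_d n) for constants r, d > 1. Define h_n = ⌊m_n⌋ if the fractional part {m_n} ≤ 1/2, and h_n = ⌈m_n⌉ otherwise. Then P(X_n ∈ {h_n, h_n + 1}) → 1 as n → ∞. -/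
/-!
Write `m_n = log_r (log_d n)`. The two-way rounding rule picks the integer `c_n = ⌈m_n - 1/2⌉`
nearest to `m_n`, so `c_n + 1 ≥ m_n + 1/2` and `c_n - 1 < m_n - 1/2`. The hypotheses with
`ε = 1/2` give `P(X_n ≤ c_n + 1) → 1` and `P(X_n ≤ c_n - 1) → 0`, and the difference of these
events is `{X_n ∈ {c_n, c_n + 1}}`.
-/

open Filter MeasureTheory Topology

theorem tendsto_measure_of_subset_union_of_tendsto {ι : Type*} {l : Filter ι} {Ω : ι → Type*}
    [∀ i, MeasurableSpace (Ω i)] {μ : ∀ i, Measure (Ω i)} [∀ i, IsProbabilityMeasure (μ i)]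
    {A B S : ∀ i, Set (Ω i)}
    (hA : Tendsto (fun i => (μ i (A i)).toReal) l (𝓝 1))
    (hB : Tendsto (fun i => (μ i (B i)).toReal) l (𝓝 0))
    (hsub : ∀ᶠ i in l, A i ⊆ S i ∪ B i) :
    Tendsto (fun i => (μ i (S i)).toReal) l (𝓝 1) := by
  refine tendsto_of_tendsto_of_tendsto_of_le_of_le' (by simpa using hA.sub hB) tendsto_const_nhds
    ?_ (Eventually.of_forall fun i => measureReal_le_one)
  filter_upwards [hsub] with i hi
  have := (measureReal_mono hi).trans (measureReal_union_le (μ := μ i) (S i) (B i))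
  simp only [measureReal_def] at this
  linarith

theorem Int.ite_fract_le_half_eq_ceil_sub_half (x : ℝ) :
    (if Int.fract x ≤ 1 / 2 then ⌊x⌋ else ⌈x⌉) = ⌈x - 1 / 2⌉ := by
  split_ifs with h
  · symm; rw [Int.ceil_eq_iff]
    constructor <;> linarith [Int.floor_add_fract x, Int.fract_nonneg x]
  · have hceil := Int.ceil_eq_add_one_sub_fract (ne_of_gt (lt_trans one_half_pos (not_le.1 h)))
    symm; rw [Int.ceil_eq_iff, hceil]
    constructor <;> linarith [Int.fract_lt_one x]

theorem Int.cast_toNat {R : Type*} [Ring R] [LinearOrder R] [IsStrictOrderedRing R] (z : ℤ) :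
    ((z.toNat : ℕ) : R) = max (z : R) 0 := by
  rw [← Int.cast_natCast, Int.toNat_eq_max, Int.cast_max, Int.cast_zero]

theorem tendsto_measure_eq_ceil_sub_half_or_eq_add_one {ι : Type*} {l : Filter ι}
    {Ω : ι → Type*} [∀ i, MeasurableSpace (Ω i)] {μ : ∀ i, Measure (Ω i)}
    [∀ i, IsProbabilityMeasure (μ i)] {X : ∀ i, Ω i → ℕ} {m : ι → ℝ}
    (hm : ∀ᶠ i in l, 1 / 2 ≤ m i)
    (hupper : ∀ h : ι → ℕ, (∀ᶠ i in l, m i + 1 / 2 ≤ h i) →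
      Tendsto (fun i => (μ i {ω | X i ω ≤ h i}).toReal) l (𝓝 1))
    (hlower : ∀ h : ι → ℕ, (∀ᶠ i in l, (h i : ℝ) ≤ m i - 1 / 2) →
      Tendsto (fun i => (μ i {ω | X i ω ≤ h i}).toReal) l (𝓝 0)) :
    Tendsto (fun i => (μ i {ω | (X i ω : ℤ) = ⌈m i - 1 / 2⌉ ∨
      (X i ω : ℤ) = ⌈m i - 1 / 2⌉ + 1}).toReal) l (𝓝 1) := by
  refine tendsto_measure_of_subset_union_of_tendsto
    (hupper (fun i => (⌈m i - 1 / 2⌉ + 1).toNat) (Eventually.of_forall fun i => ?_))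
    (hlower (fun i => (⌈m i - 1 / 2⌉ - 1).toNat) (hm.mono fun i hi => ?_))
    (Eventually.of_forall fun i ω hω => ?_)
  · rw [Int.cast_toNat]
    push_cast
    linarith [le_max_left ((⌈m i - 1 / 2⌉ : ℝ) + 1) 0, Int.le_ceil (m i - 1 / 2)]
  · -- `toNat` truncates at `0`, which is why `m i ≥ 1/2` is needed here.
    rw [Int.cast_toNat]
    push_cast
    exact max_le (by linarith [Int.ceil_lt_add_one (m i - 1 / 2)]) (by linarith)
  · simp only [Set.mem_ofPred_eq, Set.mem_union] at hω ⊢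
    omega

/-- Two-point concentration: if P(X_n ≤ h_n) → 1 whenever h_n ≥ m_n + ε
eventually and P(X_n ≤ h_n) → 0 whenever h_n ≤ m_n − ε eventually, with
m_n = log_r(log_d n), then with h_n = ⌊m_n⌋ if {m_n} ≤ 1/2 and h_n = ⌈m_n⌉
otherwise, P(X_n ∈ {h_n, h_n + 1}) → 1. -/
theorem stmt_19 (r d : ℝ) (hr : 1 < r) (hd : 1 < d)
    (Ω : ℕ → Type*) [∀ n, MeasurableSpace (Ω n)]
    (μ : ∀ n, Measure (Ω n)) (hprob : ∀ n, IsProbabilityMeasure (μ n))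
    (X : ∀ n, Ω n → ℕ)
    (hupper : ∀ ε : ℝ, 0 < ε → ε < 1 → ∀ h : ℕ → ℕ,
      (∀ᶠ n : ℕ in atTop, Real.logb r (Real.logb d n) + ε ≤ (h n : ℝ)) →
      Tendsto (fun n => ((μ n) {ω | X n ω ≤ h n}).toReal) atTop (nhds 1))
    (hlower : ∀ ε : ℝ, 0 < ε → ε < 1 → ∀ h : ℕ → ℕ,
      (∀ᶠ n : ℕ in atTop, (h n : ℝ) ≤ Real.logb r (Real.logb d n) - ε) →
      Tendsto (fun n => ((μ n) {ω | X n ω ≤ h n}).toReal) atTop (nhds 0)) :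
    Tendsto (fun n =>
        ((μ n) {ω | ((X n ω : ℤ)
            = (if Int.fract (Real.logb r (Real.logb d n)) ≤ 1 / 2
                then ⌊Real.logb r (Real.logb d n)⌋
                else ⌈Real.logb r (Real.logb d n)⌉)) ∨
          ((X n ω : ℤ)
            = (if Int.fract (Real.logb r (Real.logb d n)) ≤ 1 / 2
                then ⌊Real.logb r (Real.logb d n)⌋
                else ⌈Real.logb r (Real.logb d n)⌉) + 1)}).toReal)
      atTop (nhds 1) := by
  simp only [Int.ite_fract_le_half_eq_ceil_sub_half]
  have hm : Tendsto (fun n : ℕ => Real.logb r (Real.logb d n)) atTop atTop :=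
    (Real.tendsto_logb_atTop hr).comp
      ((Real.tendsto_logb_atTop hd).comp tendsto_natCast_atTop_atTop)
  exact tendsto_measure_eq_ceil_sub_half_or_eq_add_one (hm.eventually_ge_atTop (1 / 2))
    (hupper (1 / 2) one_half_pos one_half_lt_one) (hlower (1 / 2) one_half_pos one_half_lt_one)
end
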